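/- arXiv:2008.08852 — 2 statements merged into one kernel-verified Lean document; each statement's English description precedes it below -/
import Mathlib

section
/- There exist no integers a, b, c such that 6a² + 28ab − 2c² = −2 and 6a + 14b + 2c = 0. -/
theorem no_minus_two_class_orthogonal_to_F :
    ¬ ∃ a b c : ℤ, 6 * a ^ 2 + 28 * a * b - 2 * c ^ 2 = -2 ∧ 6 * a + 14 * b + 2 * c = 0 := by
  rintro ⟨a, b, c, h1, h2⟩
  have hc : c = -(3 * a + 7 * b) := by linarith
  subst hc
  have key : (6 * a + 14 * b) ^ 2 + 98 * b ^ 2 = 6 := by linear_combination -3 * h1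
  have hb : b = 0 := by nlinarith [sq_nonneg (6 * a + 14 * b), sq_nonneg (b - 1), sq_nonneg (b + 1)]
  subst hb
  have h6 : (6 * a) ^ 2 = 6 := by linarith
  have ha : a = 0 ∨ 1 ≤ a ^ 2 := by
    rcases eq_or_ne a 0 with h | h
    · exact Or.inl h
    · refine Or.inr ?_
      have h0 : 0 < a ^ 2 := by positivity
      exact h0
  rcases ha with h | h
  · subst h; norm_num at h6
  · nlinarith
end

section
/- For all integers a and b, 6a² + (28b − 6)a + 49b² − 14b + 1 ≠ 0; equivalently, there are no integers a, b with 6a² + 28ab + 49b² − 6a − 14b + 1 = 0. -/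
theorem no_integer_solutions_quadratic :
    ∀ a b : ℤ, 6 * a ^ 2 + (28 * b - 6) * a + 49 * b ^ 2 - 14 * b + 1 ≠ 0 := by
  intro a b h
  have hb : b = 0 := by nlinarith [sq_nonneg (12*a+28*b-6), sq_nonneg b]
  subst hb
  have : 6*(2*a-1)^2 = 2 := by ring_nf; ring_nf at h; linarith
  omega
end
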